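/- arXiv:2409.15628 — 3 statements merged into one kernel-verified Lean document; each statement's English description precedes it below -/
import Mathlib

section
/- Let G be a connected graph on vertex set {1,…,n}, a ∈ ℝ^n with aᵀ𝟙 = 0, and define R_G(θ) = aᵀθ/‖D_Gθ‖₁ for nonconstant θ (and R_G(θ) = −∞ for constant θ). Then max over all θ ∈ ℝ^n of R_G(θ) equals the max of R_G(θ) over binary vectors θ ∈ {0,1}^n. -/
open Finset

private lemma key_lemma (n : ℕ) (E : Finset (Fin n × Fin n)) (a : Fin n → ℝ)
    (ha : ∑ i, a i = 0)
    (hconn : ∀ θ : Fin n → ℝ, (∑ e ∈ E, |θ e.1 - θ e.2|) = 0 → ∃ c : ℝ, ∀ i, θ i = c)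
    (r : ℝ)
    (hr : ∀ χ : Fin n → ℝ, (∀ i, χ i = 0 ∨ χ i = 1) →
        0 < (∑ e ∈ E, |χ e.1 - χ e.2|) →
        (∑ i, a i * χ i) ≤ r * (∑ e ∈ E, |χ e.1 - χ e.2|)) :
    ∀ k : ℕ, ∀ θ : Fin n → ℝ, (Finset.image θ univ).card ≤ k →
      0 < (∑ e ∈ E, |θ e.1 - θ e.2|) →
      (∑ i, a i * θ i) ≤ r * (∑ e ∈ E, |θ e.1 - θ e.2|) := by
  intro k
  induction k with
  | zero =>
    intro θ hcard hD
    -- image empty forces n = 0, hence E = ∅ and D = 0, contradiction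
    have himg : (Finset.image θ univ) = ∅ := Finset.card_eq_zero.mp (Nat.le_zero.mp hcard)
    have huniv : (univ : Finset (Fin n)) = ∅ := by
      by_contra h
      obtain ⟨i, hi⟩ := Finset.nonempty_iff_ne_empty.mpr h
      have : θ i ∈ Finset.image θ univ := Finset.mem_image_of_mem θ hi
      simp [himg] at this
    have hE : E = ∅ := by
      ext e
      simp only [Finset.notMem_empty, iff_false]
      intro he
      have : e.1 ∈ (univ : Finset (Fin n)) := Finset.mem_univ _
      simp [huniv] at this
    rw [hE] at hD
    simp at hD
  | succ k ih =>
    intro θ hcard hD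
    -- θ is nonconstant
    have hnc : ∃ i j : Fin n, θ i ≠ θ j := by
      by_contra h
      push_neg at h
      have : (∑ e ∈ E, |θ e.1 - θ e.2|) = 0 :=
        Finset.sum_eq_zero fun e _ => by rw [h e.1 e.2]; simp
      linarith
    obtain ⟨i0, j0, hij0⟩ := hnc
    have himgne : (Finset.image θ univ).Nonempty := ⟨θ i0, Finset.mem_image_of_mem θ (mem_univ _)⟩
    set m := (Finset.image θ univ).min' himgne with hm_def
    have hcard2 : 1 < (Finset.image θ univ).card := by
      rw [Finset.one_lt_card]
      exact ⟨θ i0, Finset.mem_image_of_mem θ (mem_univ _),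
        θ j0, Finset.mem_image_of_mem θ (mem_univ _), hij0⟩
    have hm_mem : m ∈ Finset.image θ univ := Finset.min'_mem _ _
    have hS2ne : ((Finset.image θ univ).erase m).Nonempty := by
      rw [← Finset.card_pos, Finset.card_erase_of_mem hm_mem]
      omega
    set s := ((Finset.image θ univ).erase m).min' hS2ne with hs_def
    have hs_mem : s ∈ (Finset.image θ univ).erase m := Finset.min'_mem _ _
    have hs_img : s ∈ Finset.image θ univ := Finset.mem_of_mem_erase hs_mem
    have hms : m < s :=
      lt_of_le_of_ne (Finset.min'_le _ _ hs_img) (Ne.symm (Finset.ne_of_mem_erase hs_mem))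
    -- every value is m or ≥ s
    have hval : ∀ i, θ i = m ∨ s ≤ θ i := by
      intro i
      by_cases h : θ i = m
      · exact Or.inl h
      · right
        apply Finset.min'_le
        exact Finset.mem_erase.mpr ⟨h, Finset.mem_image_of_mem θ (mem_univ _)⟩
    have hmle : ∀ i, m ≤ θ i := fun i => Finset.min'_le _ _ (Finset.mem_image_of_mem θ (mem_univ _))
    set c := s - m with hc_def
    have hc : 0 < c := by simp [hc_def]; linarith
    set χ : Fin n → ℝ := fun i => if θ i = m then 0 else 1 with hχ_def
    set θ' : Fin n → ℝ := fun i => θ i - c * χ i with hθ'_def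
    have hbin : ∀ i, χ i = 0 ∨ χ i = 1 := by
      intro i; by_cases h : θ i = m <;> simp [hχ_def, h]
    -- splitting identity
    have hsplit : ∀ p q : Fin n, |θ p - θ q| = |θ' p - θ' q| + c * |χ p - χ q| := by
      intro p q
      have hχval : ∀ v, (θ v = m → χ v = 0) ∧ (s ≤ θ v → χ v = 1) := by
        intro v
        constructor
        · intro h; simp [hχ_def, h]
        · intro h
          have : θ v ≠ m := by intro h'; rw [h'] at h; linarith
          simp [hχ_def, this]
      rcases hval p with hp | hp <;> rcases hval q with hq | hq
      · have e1 : χ p = 0 := (hχval p).1 hp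
        have e2 : χ q = 0 := (hχval q).1 hq
        simp only [hθ'_def, e1, e2, mul_zero, sub_zero, hp, hq]
        simp
      · have e1 : χ p = 0 := (hχval p).1 hp
        have e2 : χ q = 1 := (hχval q).2 hq
        simp only [hθ'_def, e1, e2, mul_zero, mul_one, sub_zero, hp]
        rw [show |(0:ℝ) - 1| = 1 by norm_num,
          abs_of_nonpos (by linarith : m - θ q ≤ 0),
          abs_of_nonpos (by rw [hc_def]; linarith : m - (θ q - c) ≤ 0)]
        ring
      · have e1 : χ p = 1 := (hχval p).2 hp
        have e2 : χ q = 0 := (hχval q).1 hq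
        simp only [hθ'_def, e1, e2, mul_zero, mul_one, sub_zero, hq]
        rw [abs_one,
          abs_of_nonneg (by linarith : (0:ℝ) ≤ θ p - m),
          abs_of_nonneg (by rw [hc_def]; linarith : (0:ℝ) ≤ θ p - c - m)]
        ring
      · have e1 : χ p = 1 := (hχval p).2 hp
        have e2 : χ q = 1 := (hχval q).2 hq
        simp only [hθ'_def, e1, e2, mul_one]
        rw [show θ p - c - (θ q - c) = θ p - θ q by ring]
        simp
    have hDsplit : (∑ e ∈ E, |θ e.1 - θ e.2|)
        = (∑ e ∈ E, |θ' e.1 - θ' e.2|) + c * (∑ e ∈ E, |χ e.1 - χ e.2|) := by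
      rw [Finset.mul_sum, ← Finset.sum_add_distrib]
      exact Finset.sum_congr rfl fun e _ => hsplit e.1 e.2
    have hNsplit : (∑ i, a i * θ i)
        = (∑ i, a i * θ' i) + c * (∑ i, a i * χ i) := by
      rw [Finset.mul_sum, ← Finset.sum_add_distrib]
      refine Finset.sum_congr rfl fun i _ => ?_
      simp only [hθ'_def]; ring
    -- χ is nonconstant, so Dχ > 0
    obtain ⟨p0, _, hp0⟩ := Finset.mem_image.mp hm_mem
    obtain ⟨q0, _, hq0⟩ := Finset.mem_image.mp hs_img
    have hq0m : θ q0 ≠ m := by rw [hq0]; exact ne_of_gt hms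
    have hDχnn : 0 ≤ (∑ e ∈ E, |χ e.1 - χ e.2|) :=
      Finset.sum_nonneg fun e _ => abs_nonneg _
    have hDχ : 0 < (∑ e ∈ E, |χ e.1 - χ e.2|) := by
      rcases lt_or_eq_of_le hDχnn with h | h
      · exact h
      · exfalso
        obtain ⟨c0, hc0⟩ := hconn χ h.symm
        have h1 : χ p0 = 0 := by simp [hχ_def, hp0]
        have h2 : χ q0 = 1 := by simp [hχ_def, hq0m]
        rw [hc0 p0] at h1; rw [hc0 q0] at h2
        rw [h1] at h2; norm_num at h2
    have hNχ : (∑ i, a i * χ i) ≤ r * (∑ e ∈ E, |χ e.1 - χ e.2|) := hr χ hbin hDχ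
    -- bound on θ' part
    have hDθ'nn : 0 ≤ (∑ e ∈ E, |θ' e.1 - θ' e.2|) :=
      Finset.sum_nonneg fun e _ => abs_nonneg _
    have hNθ' : (∑ i, a i * θ' i) ≤ r * (∑ e ∈ E, |θ' e.1 - θ' e.2|) := by
      rcases lt_or_eq_of_le hDθ'nn with h | h
      · -- apply induction hypothesis; need card of image of θ' ≤ k
        apply ih θ' _ h
        have hsub : Finset.image θ' univ ⊆
            insert m ((((Finset.image θ univ).erase m).erase s).image (fun v => v - c)) := by
          intro x hx
          obtain ⟨i, _, hi⟩ := Finset.mem_image.mp hx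
          by_cases h1 : θ i = m
          · have : x = m := by rw [← hi]; simp [hθ'_def, hχ_def, h1]
            rw [this]; exact Finset.mem_insert_self _ _
          · have hx' : x = θ i - c := by rw [← hi]; simp [hθ'_def, hχ_def, h1]
            by_cases h2 : θ i = s
            · have : x = m := by rw [hx', h2, hc_def]; ring
              rw [this]; exact Finset.mem_insert_self _ _
            · apply Finset.mem_insert_of_mem
              rw [hx']
              apply Finset.mem_image_of_mem
              exact Finset.mem_erase.mpr ⟨h2, Finset.mem_erase.mpr ⟨h1,
                Finset.mem_image_of_mem θ (mem_univ _)⟩⟩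
        have hc1 := Finset.card_le_card hsub
        have hc2 := Finset.card_insert_le m
          ((((Finset.image θ univ).erase m).erase s).image (fun v => v - c))
        have hc3 := Finset.card_image_le (s := ((Finset.image θ univ).erase m).erase s)
          (f := fun v => v - c)
        have hc4 : (((Finset.image θ univ).erase m).erase s).card
            = (Finset.image θ univ).card - 2 := by
          rw [Finset.card_erase_of_mem hs_mem, Finset.card_erase_of_mem hm_mem]
          omega
        omega
      · -- θ' is constant, so its numerator is 0
        obtain ⟨c0, hc0⟩ := hconn θ' h.symm
        have : (∑ i, a i * θ' i) = 0 := by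
          calc (∑ i, a i * θ' i) = ∑ i, a i * c0 := by
                exact Finset.sum_congr rfl fun i _ => by rw [hc0 i]
            _ = (∑ i, a i) * c0 := by rw [Finset.sum_mul]
            _ = 0 := by rw [ha]; ring
        rw [this, ← h]
        simp
    -- combine
    rw [hNsplit, hDsplit]
    have := mul_le_mul_of_nonneg_left hNχ (le_of_lt hc)
    nlinarith

/-- For a connected graph `G` on `{1,…,n}` and `a` with `aᵀ𝟙 = 0`,
letting `R_G(θ) = aᵀθ / ‖D_G θ‖₁` for nonconstant `θ` (and `-∞` for constant `θ`, so
constant vectors never attain the maximum), the maximum of `R_G` over all `θ ∈ ℝ^n`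
equals its maximum over binary vectors `θ ∈ {0,1}^n`. -/
theorem stmt2 (n : ℕ) (E : Finset (Fin n × Fin n)) (a : Fin n → ℝ)
    (ha : ∑ i, a i = 0)
    (hconn : ∀ θ : Fin n → ℝ, (∑ e ∈ E, |θ e.1 - θ e.2|) = 0 → ∃ c : ℝ, ∀ i, θ i = c) :
    sSup {r : ℝ | ∃ θ : Fin n → ℝ,
        0 < (∑ e ∈ E, |θ e.1 - θ e.2|) ∧
        r = (∑ i, a i * θ i) / (∑ e ∈ E, |θ e.1 - θ e.2|)}
      = sSup {r : ℝ | ∃ θ : Fin n → ℝ, (∀ i, θ i = 0 ∨ θ i = 1) ∧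
        0 < (∑ e ∈ E, |θ e.1 - θ e.2|) ∧
        r = (∑ i, a i * θ i) / (∑ e ∈ E, |θ e.1 - θ e.2|)} := by
  set S : Set ℝ := {r : ℝ | ∃ θ : Fin n → ℝ,
        0 < (∑ e ∈ E, |θ e.1 - θ e.2|) ∧
        r = (∑ i, a i * θ i) / (∑ e ∈ E, |θ e.1 - θ e.2|)} with hS_def
  set T : Set ℝ := {r : ℝ | ∃ θ : Fin n → ℝ, (∀ i, θ i = 0 ∨ θ i = 1) ∧
        0 < (∑ e ∈ E, |θ e.1 - θ e.2|) ∧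
        r = (∑ i, a i * θ i) / (∑ e ∈ E, |θ e.1 - θ e.2|)} with hT_def
  have hTS : T ⊆ S := fun r ⟨θ, _, hD, hr⟩ => ⟨θ, hD, hr⟩
  -- T is finite, hence bounded above
  have hTfin : T.Finite := by
    have : T ⊆ Set.range (fun b : Fin n → Bool =>
        (∑ i, a i * (if b i then (1:ℝ) else 0)) /
        (∑ e ∈ E, |(if b e.1 then (1:ℝ) else 0) - (if b e.2 then (1:ℝ) else 0)|)) := by
      rintro r ⟨θ, hbin, hD, hr⟩
      refine ⟨fun i => decide (θ i = 1), ?_⟩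
      have hfun : ∀ i, (if (decide (θ i = 1) : Bool) then (1:ℝ) else 0) = θ i := by
        intro i
        rcases hbin i with h | h <;> simp [h]
      simp only [hfun, hr]
    exact Set.Finite.subset (Set.finite_range _) this
  have hTbdd : BddAbove T := hTfin.bddAbove
  rcases Set.eq_empty_or_nonempty S with hSe | hSne
  · have hTe : T = ∅ := by
      rw [← Set.subset_empty_iff, ← hSe]; exact hTS
    rw [hSe, hTe]
  · -- main bound from key_lemma
    have hkey : ∀ θ : Fin n → ℝ, 0 < (∑ e ∈ E, |θ e.1 - θ e.2|) →
        (∑ i, a i * θ i) ≤ sSup T * (∑ e ∈ E, |θ e.1 - θ e.2|) := by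
      intro θ hD
      apply key_lemma n E a ha hconn (sSup T) _ (Finset.image θ univ).card θ le_rfl hD
      intro χ hbin hDχ
      have hmem : (∑ i, a i * χ i) / (∑ e ∈ E, |χ e.1 - χ e.2|) ∈ T :=
        ⟨χ, hbin, hDχ, rfl⟩
      have := le_csSup hTbdd hmem
      calc (∑ i, a i * χ i)
          = ((∑ i, a i * χ i) / (∑ e ∈ E, |χ e.1 - χ e.2|)) * (∑ e ∈ E, |χ e.1 - χ e.2|) := by
            field_simp
        _ ≤ sSup T * (∑ e ∈ E, |χ e.1 - χ e.2|) :=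
            mul_le_mul_of_nonneg_right this (le_of_lt hDχ)
    have hub : ∀ r ∈ S, r ≤ sSup T := by
      rintro r ⟨θ, hD, hr⟩
      rw [hr, div_le_iff₀ hD]
      exact hkey θ hD
    -- T nonempty
    have hSne' := hSne
    obtain ⟨r0, θ0, hD0, _⟩ := hSne'
    have hnc : ∃ i j : Fin n, θ0 i ≠ θ0 j := by
      by_contra h
      push_neg at h
      have : (∑ e ∈ E, |θ0 e.1 - θ0 e.2|) = 0 :=
        Finset.sum_eq_zero fun e _ => by rw [h e.1 e.2]; simp
      linarith
    obtain ⟨i0, j0, hij0⟩ := hnc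
    have hTne : T.Nonempty := by
      set χ : Fin n → ℝ := fun v => if θ0 v = θ0 i0 then 0 else 1 with hχ_def
      have hbin : ∀ i, χ i = 0 ∨ χ i = 1 := by
        intro i; by_cases h : θ0 i = θ0 i0 <;> simp [hχ_def, h]
      have hDχnn : 0 ≤ (∑ e ∈ E, |χ e.1 - χ e.2|) :=
        Finset.sum_nonneg fun e _ => abs_nonneg _
      have hDχ : 0 < (∑ e ∈ E, |χ e.1 - χ e.2|) := by
        rcases lt_or_eq_of_le hDχnn with h | h
        · exact h
        · exfalso
          obtain ⟨c0, hc0⟩ := hconn χ h.symm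
          have h1 : χ i0 = 0 := by simp [hχ_def]
          have h2 : χ j0 = 1 := by simp [hχ_def, (Ne.symm hij0)]
          rw [hc0 i0] at h1; rw [hc0 j0] at h2
          rw [h1] at h2; norm_num at h2
      exact ⟨_, χ, hbin, hDχ, rfl⟩
    have hSbdd : BddAbove S := ⟨sSup T, hub⟩
    exact le_antisymm (csSup_le hSne hub) (csSup_le_csSup hSbdd hTne hTS)
end

section
/- Piecewise-constant approximation error bound: let Z₁,…,Z_n ∈ ℝ^d, let Ξ be a partition of the domain into cubes of side ε₀ with ε ≥ √d·ε₀, and suppose every cube contains at least n_min ≥ 1 points. For θ ∈ ℝ^n define P_Ξθ by replacing each θ_i with the average of θ over points in the cube containing Z_i. Then ‖θ − P_Ξθ‖₁ ≤ DTV_ε(θ)/n_min, where DTV_ε(θ) = Σ_{i,j=1}^n |θ_i − θ_j|·1[‖Zᵢ−Zⱼ‖₂ ≤ ε]. -/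
open Finset

/-- Piecewise-constant approximation error bound: let `Z₁,…,Z_n ∈ ℝ^d`,
let `Ξ` be the partition of the domain into cubes of side `ε₀` (so the cube containing
`Zᵢ` is indexed by `c i = (⌊Zᵢ^{(k)}/ε₀⌋)_k`), with `ε ≥ √d·ε₀`, and suppose every cube
contains at least `n_min ≥ 1` of the points.  Defining `P_Ξ θ` by replacing each `θᵢ`
with the average of `θ` over the points in the cube containing `Zᵢ`, we have
`‖θ − P_Ξ θ‖₁ ≤ DTV_ε(θ)/n_min`, where
`DTV_ε(θ) = ∑_{i,j} |θᵢ − θⱼ|·1[‖Zᵢ−Zⱼ‖₂ ≤ ε]`. -/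
theorem stmt5 (d n : ℕ) (ε ε₀ : ℝ) (hε₀ : 0 < ε₀) (hε : Real.sqrt d * ε₀ ≤ ε)
    (Z : Fin n → EuclideanSpace ℝ (Fin d)) (θ : Fin n → ℝ)
    (c : Fin n → Fin d → ℤ) (hc : ∀ i k, c i k = ⌊Z i k / ε₀⌋)
    (nmin : ℕ) (hnmin : 1 ≤ nmin)
    (hmin : ∀ i, nmin ≤ (Finset.univ.filter (fun j => c j = c i)).card) :
    ∑ i, |θ i - (∑ j ∈ Finset.univ.filter (fun j => c j = c i), θ j) /
        ((Finset.univ.filter (fun j => c j = c i)).card : ℝ)|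
      ≤ (∑ i, ∑ j, if dist (Z i) (Z j) ≤ ε then |θ i - θ j| else 0) / (nmin : ℝ) := by
  have hnm : (0:ℝ) < (nmin : ℝ) := by exact_mod_cast hnmin
  -- distance bound for points in the same cube
  have hdist : ∀ i j : Fin n, c j = c i → dist (Z i) (Z j) ≤ ε := by
    intro i j hij
    have hcoord : ∀ k, dist (Z i k) (Z j k) ≤ ε₀ := by
      intro k
      have hfl : ⌊Z i k / ε₀⌋ = ⌊Z j k / ε₀⌋ := by
        rw [← hc i k, ← hc j k, hij]
      have h1 : |Z i k / ε₀ - Z j k / ε₀| < 1 := Int.abs_sub_lt_one_of_floor_eq_floor hfl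
      rw [div_sub_div_same, abs_div, abs_of_pos hε₀, div_lt_one hε₀] at h1
      simpa [Real.dist_eq] using h1.le
    calc dist (Z i) (Z j) = Real.sqrt (∑ k, dist (Z i k) (Z j k) ^ 2) :=
          EuclideanSpace.dist_eq (Z i) (Z j)
      _ ≤ Real.sqrt (∑ _k : Fin d, ε₀ ^ 2) := by
          apply Real.sqrt_le_sqrt
          apply Finset.sum_le_sum
          intro k _
          exact pow_le_pow_left₀ dist_nonneg (hcoord k) 2
      _ = Real.sqrt d * ε₀ := by
          rw [Finset.sum_const, Finset.card_univ, Fintype.card_fin, nsmul_eq_mul,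
            Real.sqrt_mul (by positivity), Real.sqrt_sq hε₀.le]
      _ ≤ ε := hε
  have key : ∀ i : Fin n,
      |θ i - (∑ j ∈ Finset.univ.filter (fun j => c j = c i), θ j) /
        ((Finset.univ.filter (fun j => c j = c i)).card : ℝ)|
      ≤ (∑ j, if dist (Z i) (Z j) ≤ ε then |θ i - θ j| else 0) / (nmin : ℝ) := by
    intro i
    set S := Finset.univ.filter (fun j => c j = c i) with hS
    have hcard : nmin ≤ S.card := hmin i
    have hcpos : (0:ℝ) < (S.card : ℝ) := by
      exact_mod_cast lt_of_lt_of_le hnmin hcard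
    have h1 : θ i - (∑ j ∈ S, θ j) / (S.card : ℝ)
        = (∑ j ∈ S, (θ i - θ j)) / (S.card : ℝ) := by
      rw [Finset.sum_sub_distrib, Finset.sum_const, nsmul_eq_mul]
      field_simp
    rw [h1, abs_div, abs_of_pos hcpos]
    have h2 : |∑ j ∈ S, (θ i - θ j)| ≤ ∑ j ∈ S, |θ i - θ j| :=
      Finset.abs_sum_le_sum_abs _ _
    have h3 : ∑ j ∈ S, |θ i - θ j|
        ≤ ∑ j, if dist (Z i) (Z j) ≤ ε then |θ i - θ j| else 0 := by
      have : ∑ j ∈ S, |θ i - θ j|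
          = ∑ j ∈ S, (if dist (Z i) (Z j) ≤ ε then |θ i - θ j| else 0) := by
        apply Finset.sum_congr rfl
        intro j hj
        have : c j = c i := (Finset.mem_filter.mp hj).2
        rw [if_pos (hdist i j this)]
      rw [this]
      apply Finset.sum_le_sum_of_subset_of_nonneg (Finset.subset_univ S)
      intro j _ _
      positivity
    calc |∑ j ∈ S, (θ i - θ j)| / (S.card : ℝ)
        ≤ (∑ j ∈ S, |θ i - θ j|) / (S.card : ℝ) :=
          div_le_div_of_nonneg_right h2 hcpos.le |>.trans_eq rfl
      _ ≤ (∑ j ∈ S, |θ i - θ j|) / (nmin : ℝ) := by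
          apply div_le_div_of_nonneg_left _ hnm _
          · exact Finset.sum_nonneg fun j _ => abs_nonneg _
          · exact_mod_cast hcard
      _ ≤ (∑ j, if dist (Z i) (Z j) ≤ ε then |θ i - θ j| else 0) / (nmin : ℝ) :=
          div_le_div_of_nonneg_right h3 hnm.le
  calc ∑ i, |θ i - (∑ j ∈ Finset.univ.filter (fun j => c j = c i), θ j) /
        ((Finset.univ.filter (fun j => c j = c i)).card : ℝ)|
      ≤ ∑ i, (∑ j, if dist (Z i) (Z j) ≤ ε then |θ i - θ j| else 0) / (nmin : ℝ) :=
        Finset.sum_le_sum fun i _ => key i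
    _ = (∑ i, ∑ j, if dist (Z i) (Z j) ≤ ε then |θ i - θ j| else 0) / (nmin : ℝ) := by
        rw [Finset.sum_div]
end

section
/- Grid TV bound for cube averages: in the setting above with ε = 2√d·ε₀, define the grid graph G_Ξ on cubes with edges between cubes Δ_j and Δ_{j±e_i}, and let P^Ξθ ∈ ℝ^Ξ be the vector of cube averages. Then DTV_Ξ(P^Ξθ) ≤ DTV_ε(θ)/n_min², where DTV_Ξ(γ) = Σ_{Δ∼Δ'} |γ_Δ − γ_{Δ'}| and n_min = min_Δ n(Δ) ≥ 1. -/
open Finset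


lemma floor_close {a b : ℝ} (h : |(⌊a⌋ : ℤ) - ⌊b⌋| ≤ 1) : |a - b| ≤ 2 := by
  rw [abs_le] at h ⊢
  have h1 := Int.floor_le a
  have h2 := Int.floor_le b
  have h3 := Int.lt_floor_add_one a
  have h4 := Int.lt_floor_add_one b
  have h5 : ((⌊a⌋ : ℝ)) - ⌊b⌋ ≤ 1 := by exact_mod_cast h.2
  have h6 : (-1 : ℝ) ≤ ((⌊a⌋ : ℝ)) - ⌊b⌋ := by exact_mod_cast h.1
  constructor <;> nlinarith

lemma avg_diff_le {n : ℕ} (θ : Fin n → ℝ) (S T : Finset (Fin n))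
    (hS : 0 < S.card) (hT : 0 < T.card) :
    |(∑ i ∈ S, θ i) / S.card - (∑ j ∈ T, θ j) / T.card|
      ≤ (∑ i ∈ S, ∑ j ∈ T, |θ i - θ j|) / (S.card * T.card) := by
  have hS' : (0:ℝ) < S.card := by exact_mod_cast hS
  have hT' : (0:ℝ) < T.card := by exact_mod_cast hT
  have key : (∑ i ∈ S, θ i) / S.card - (∑ j ∈ T, θ j) / T.card
      = (∑ i ∈ S, ∑ j ∈ T, (θ i - θ j)) / ((S.card : ℝ) * T.card) := by
    have : ∑ i ∈ S, ∑ j ∈ T, (θ i - θ j)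
        = (T.card : ℝ) * (∑ i ∈ S, θ i) - (S.card : ℝ) * (∑ j ∈ T, θ j) := by
      simp [Finset.sum_sub_distrib, ← Finset.sum_mul, mul_comm]
    rw [this]
    field_simp
  rw [key, abs_div, abs_of_pos (mul_pos hS' hT')]
  refine div_le_div_of_nonneg_right ?_ (mul_pos hS' hT').le
  calc |∑ i ∈ S, ∑ j ∈ T, (θ i - θ j)| ≤ ∑ i ∈ S, |∑ j ∈ T, (θ i - θ j)| :=
        Finset.abs_sum_le_sum_abs _ _
    _ ≤ ∑ i ∈ S, ∑ j ∈ T, |θ i - θ j| :=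
        Finset.sum_le_sum fun i _ => Finset.abs_sum_le_sum_abs _ _

lemma dist_le_of_adj {d : ℕ} (ε₀ : ℝ) (hε₀ : 0 < ε₀) (x y : EuclideanSpace ℝ (Fin d))
    (h : ∀ k, |(⌊x k / ε₀⌋ : ℤ) - ⌊y k / ε₀⌋| ≤ 1) :
    dist x y ≤ 2 * Real.sqrt d * ε₀ := by
  rw [EuclideanSpace.dist_eq]
  have hbd : ∀ k, dist (x k) (y k) ^ 2 ≤ (2 * ε₀) ^ 2 := by
    intro k
    have h2 : |x k / ε₀ - y k / ε₀| ≤ 2 := floor_close (h k)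
    have h3 : |x k - y k| ≤ 2 * ε₀ := by
      rw [div_sub_div_same, abs_div, abs_of_pos hε₀, div_le_iff₀ hε₀] at h2
      linarith
    rw [Real.dist_eq]
    exact pow_le_pow_left₀ (abs_nonneg _) h3 2
  calc Real.sqrt (∑ k, dist (x k) (y k) ^ 2)
      ≤ Real.sqrt (∑ _k : Fin d, (2 * ε₀) ^ 2) :=
        Real.sqrt_le_sqrt (Finset.sum_le_sum fun k _ => hbd k)
    _ = 2 * Real.sqrt d * ε₀ := by
        rw [Finset.sum_const, Finset.card_univ, Fintype.card_fin, nsmul_eq_mul,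
          Real.sqrt_mul (by positivity), Real.sqrt_sq (by positivity)]
        ring


/-- Grid TV bound for cube averages: in the setting of the cube
partition (cubes of side `ε₀`, cube index `c i = (⌊Zᵢ^{(k)}/ε₀⌋)_k`) with
`ε = 2√d·ε₀`, each cube containing at least `n_min ≥ 1` points, define the grid graph
`G_Ξ` on (occupied) cubes with edges between cubes `Δ_j` and `Δ_{j ± e_k}`, and let
`P^Ξ θ` be the vector of cube averages.  Then
`DTV_Ξ(P^Ξ θ) ≤ DTV_ε(θ)/n_min²`, where `DTV_Ξ(γ) = ∑_{Δ ∼ Δ'} |γ_Δ − γ_{Δ'}|` and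
`DTV_ε(θ) = ∑_{i,j} |θᵢ − θⱼ|·1[‖Zᵢ−Zⱼ‖₂ ≤ ε]`. -/
theorem stmt6 (d n : ℕ) (ε ε₀ : ℝ) (hε₀ : 0 < ε₀) (hε : ε = 2 * Real.sqrt d * ε₀)
    (Z : Fin n → EuclideanSpace ℝ (Fin d)) (θ : Fin n → ℝ)
    (c : Fin n → Fin d → ℤ) (hc : ∀ i k, c i k = ⌊Z i k / ε₀⌋)
    (nmin : ℕ) (hnmin : 1 ≤ nmin)
    (hmin : ∀ i, nmin ≤ (Finset.univ.filter (fun j => c j = c i)).card) :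
    (∑ v ∈ Finset.univ.image c, ∑ w ∈ Finset.univ.image c,
        if (∃ k : Fin d, w = Function.update v k (v k + 1) ∨
            w = Function.update v k (v k - 1)) then
          |(∑ j ∈ Finset.univ.filter (fun j => c j = v), θ j) /
              ((Finset.univ.filter (fun j => c j = v)).card : ℝ)
            - (∑ j ∈ Finset.univ.filter (fun j => c j = w), θ j) /
              ((Finset.univ.filter (fun j => c j = w)).card : ℝ)|
        else 0)
      ≤ (∑ i, ∑ j, if dist (Z i) (Z j) ≤ ε then |θ i - θ j| else 0) / (nmin : ℝ)^2 := by
  classical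
  set f : Fin n → Fin n → ℝ := fun i j => if dist (Z i) (Z j) ≤ ε then |θ i - θ j| else 0
    with hfdef
  have hf0 : ∀ i j, 0 ≤ f i j := by
    intro i j; by_cases h : dist (Z i) (Z j) ≤ ε <;> simp [hfdef, h]
  have hnmin' : (0:ℝ) < (nmin : ℝ) ^ 2 := by positivity
  -- fiberwise summation
  have fib : ∀ (g : Fin n → ℝ),
      ∑ v ∈ Finset.univ.image c, ∑ i ∈ Finset.univ.filter (fun j => c j = v), g i
        = ∑ i, g i := by
    intro g
    exact Finset.sum_fiberwise_of_maps_to (fun x _ => Finset.mem_image_of_mem c (mem_univ x)) g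
  -- per-term bound
  have hterm : ∀ v ∈ Finset.univ.image c, ∀ w ∈ Finset.univ.image c,
      (if (∃ k : Fin d, w = Function.update v k (v k + 1) ∨
            w = Function.update v k (v k - 1)) then
          |(∑ j ∈ Finset.univ.filter (fun j => c j = v), θ j) /
              ((Finset.univ.filter (fun j => c j = v)).card : ℝ)
            - (∑ j ∈ Finset.univ.filter (fun j => c j = w), θ j) /
              ((Finset.univ.filter (fun j => c j = w)).card : ℝ)|
        else 0)
      ≤ (∑ i ∈ Finset.univ.filter (fun j => c j = v),
          ∑ j ∈ Finset.univ.filter (fun j => c j = w), f i j) / (nmin : ℝ)^2 := by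
    intro v hv w hw
    by_cases hadj : (∃ k : Fin d, w = Function.update v k (v k + 1) ∨
        w = Function.update v k (v k - 1))
    · rw [if_pos hadj]
      obtain ⟨i₀, -, hi₀⟩ := Finset.mem_image.mp hv
      obtain ⟨j₀, -, hj₀⟩ := Finset.mem_image.mp hw
      have hcv : nmin ≤ (Finset.univ.filter (fun j => c j = v)).card := by
        rw [← hi₀]; exact hmin i₀
      have hcw : nmin ≤ (Finset.univ.filter (fun j => c j = w)).card := by
        rw [← hj₀]; exact hmin j₀
      have hSv : 0 < (Finset.univ.filter (fun j => c j = v)).card := lt_of_lt_of_le hnmin hcv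
      have hSw : 0 < (Finset.univ.filter (fun j => c j = w)).card := lt_of_lt_of_le hnmin hcw
      -- every point pair is within ε
      have hdist : ∀ i ∈ Finset.univ.filter (fun j => c j = v),
          ∀ j ∈ Finset.univ.filter (fun j => c j = w), dist (Z i) (Z j) ≤ ε := by
        intro i hi j hj
        have hci : c i = v := (Finset.mem_filter.mp hi).2
        have hcj : c j = w := (Finset.mem_filter.mp hj).2
        obtain ⟨k, hk⟩ := hadj
        rw [hε]
        apply dist_le_of_adj ε₀ hε₀
        intro l
        have hil : (⌊Z i l / ε₀⌋ : ℤ) = v l := by rw [← hc, hci]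
        have hjl : (⌊Z j l / ε₀⌋ : ℤ) = w l := by rw [← hc, hcj]
        rw [hil, hjl]
        by_cases hlk : l = k
        · subst hlk
          rcases hk with hk | hk <;> rw [hk] <;> simp
        · rcases hk with hk | hk <;> rw [hk, Function.update_of_ne hlk] <;> simp
      have heq : ∑ i ∈ Finset.univ.filter (fun j => c j = v),
          ∑ j ∈ Finset.univ.filter (fun j => c j = w), f i j
          = ∑ i ∈ Finset.univ.filter (fun j => c j = v),
            ∑ j ∈ Finset.univ.filter (fun j => c j = w), |θ i - θ j| := by
        refine Finset.sum_congr rfl fun i hi => Finset.sum_congr rfl fun j hj => ?_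
        simp [hfdef, if_pos (hdist i hi j hj)]
      rw [heq]
      refine le_trans (avg_diff_le θ _ _ hSv hSw) ?_
      apply div_le_div_of_nonneg_left
      · positivity
      · exact hnmin'
      · rw [sq]
        push_cast
        exact mul_le_mul (by exact_mod_cast hcv) (by exact_mod_cast hcw)
          (by positivity) (by positivity)
    · rw [if_neg hadj]
      positivity
  calc (∑ v ∈ Finset.univ.image c, ∑ w ∈ Finset.univ.image c,
        if (∃ k : Fin d, w = Function.update v k (v k + 1) ∨
            w = Function.update v k (v k - 1)) then
          |(∑ j ∈ Finset.univ.filter (fun j => c j = v), θ j) /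
              ((Finset.univ.filter (fun j => c j = v)).card : ℝ)
            - (∑ j ∈ Finset.univ.filter (fun j => c j = w), θ j) /
              ((Finset.univ.filter (fun j => c j = w)).card : ℝ)|
        else 0)
      ≤ ∑ v ∈ Finset.univ.image c, ∑ w ∈ Finset.univ.image c,
          (∑ i ∈ Finset.univ.filter (fun j => c j = v),
            ∑ j ∈ Finset.univ.filter (fun j => c j = w), f i j) / (nmin : ℝ)^2 :=
        Finset.sum_le_sum fun v hv => Finset.sum_le_sum fun w hw => hterm v hv w hw
    _ = (∑ v ∈ Finset.univ.image c, ∑ w ∈ Finset.univ.image c,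
          ∑ i ∈ Finset.univ.filter (fun j => c j = v),
            ∑ j ∈ Finset.univ.filter (fun j => c j = w), f i j) / (nmin : ℝ)^2 := by
        simp only [← Finset.sum_div]
    _ = (∑ i, ∑ j, f i j) / (nmin : ℝ)^2 := by
        congr 1
        calc ∑ v ∈ Finset.univ.image c, ∑ w ∈ Finset.univ.image c,
              ∑ i ∈ Finset.univ.filter (fun j => c j = v),
                ∑ j ∈ Finset.univ.filter (fun j => c j = w), f i j
            = ∑ v ∈ Finset.univ.image c, ∑ i ∈ Finset.univ.filter (fun j => c j = v),
                ∑ w ∈ Finset.univ.image c,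
                  ∑ j ∈ Finset.univ.filter (fun j => c j = w), f i j :=
              Finset.sum_congr rfl fun v _ => Finset.sum_comm
          _ = ∑ v ∈ Finset.univ.image c, ∑ i ∈ Finset.univ.filter (fun j => c j = v),
                ∑ j, f i j :=
              Finset.sum_congr rfl fun v _ => Finset.sum_congr rfl fun i _ => fib _
          _ = ∑ i, ∑ j, f i j := fib _
end
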